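/- arXiv:2102.11935 — 3 statements merged into one kernel-verified Lean document; each statement's English description precedes it below -/
import Mathlib

section
/- Let f_W(x) = W^L ρ(W^{L-1} ⋯ ρ(W^1 x) ⋯) be an L-layer neural network, fix a layer index N with 1 ≤ N ≤ L−1, and let f_Ŵ(x̂) = W^L ρ(⋯ Ŵ^N ρ(⋯ ρ(W^1 x̂) ⋯) ⋯) denote the network in which only the N-th weight matrix is replaced by Ŵ^N ∈ B_{W^N}(ε_N) and the input by x̂ ∈ B_x(ε_x). Then for every pair of output classes i, j: f^{ij}_{Ŵ}(x̂) ≤ f^{ij}_W(x) + ‖W^L_{i,:} − W^L_{j,:}‖_1 · (∏_{k=1}^{L−N−1} ‖W^{L−k}‖_∞) · ( ε_N ‖z^{N−1}_W(x)‖_1 + ε_x (∏_{m=1}^{N−1} ‖W^m‖_∞)(‖W^N‖_∞ + d_N ε_N) ), where d_N is the number of columns of W^N and empty products equal 1. -/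
/-- Vector ℓ1 norm: `‖v‖₁ = Σ_q |v_q|`. -/
noncomputable def vecL1 {n : ℕ} (v : Fin n → ℝ) : ℝ := ∑ q, |v q|

/-- Vector ℓ∞ norm: `‖v‖_∞ = max_q |v_q|`. -/
noncomputable def vecLinf {n : ℕ} (v : Fin n → ℝ) : ℝ := ⨆ q, |v q|

/-- Matrix ℓ∞→ℓ∞ operator norm: `‖W‖_∞ = max_p Σ_q |W_{p,q}|`. -/
noncomputable def matLinf {m n : ℕ} (W : Matrix (Fin m) (Fin n) ℝ) : ℝ := ⨆ p, ∑ q, |W p q|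

/-- Matrix ℓ1→ℓ1 operator norm: `‖W‖₁ = max_q Σ_p |W_{p,q}|`. -/
noncomputable def matL1 {m n : ℕ} (W : Matrix (Fin m) (Fin n) ℝ) : ℝ := ⨆ q, ∑ p, |W p q|

/-- `zLayer d ρ W k x` is the `k`-th zLayer-layer output
`z^k_W(x) = ρ(W^k ⋯ ρ(W^1 x) ⋯)`, with `z^0_W(x) = x`.
Here `W k` denotes the paper's weight matrix `W^{k+1}`
(so `W : ∀ k, Matrix (Fin (d (k+1))) (Fin (d k)) ℝ` lists `W^1, W^2, …`). -/
noncomputable def zLayer (d : ℕ → ℕ) (ρ : ℝ → ℝ)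
    (W : ∀ k, Matrix (Fin (d (k + 1))) (Fin (d k)) ℝ) :
    (k : ℕ) → (Fin (d 0) → ℝ) → Fin (d k) → ℝ
  | 0, x => x
  | k + 1, x => fun p => ρ ((W k).mulVec (zLayer d ρ W k x) p)

/-- `nnet d ρ W k x = (W^{k+1}) z^k_W(x)` is the output of the `(k+1)`-layer network
`f_W(x) = W^{k+1} ρ(W^k ⋯ ρ(W^1 x) ⋯)`.  In particular `nnet d ρ W (L-1)` is the
paper's `L`-layer network. -/
noncomputable def nnet (d : ℕ → ℕ) (ρ : ℝ → ℝ)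
    (W : ∀ k, Matrix (Fin (d (k + 1))) (Fin (d k)) ℝ) (k : ℕ)
    (x : Fin (d 0) → ℝ) : Fin (d (k + 1)) → ℝ :=
  (W k).mulVec (zLayer d ρ W k x)

/-!
Compare the two forward passes layer by layer in the entrywise sup norm. Below layer `N` the
weights agree, so a `1`-Lipschitz activation and a matrix of ℓ∞ operator norm `‖W^m‖_∞`
multiply the input error `ε_x` by at most `‖W^m‖_∞` per layer. At layer `N` the error splits as
`Ŵ^N (ẑ - z) + (Ŵ^N - W^N) z`: the first term costs `‖Ŵ^N‖_∞ ≤ ‖W^N‖_∞ + d_N ε_N` times the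
incoming error, the second at most `ε_N ‖z^{N-1}‖₁`. Above layer `N` the error is again
multiplied by `‖W^m‖_∞` per layer, and the margin picks it up through the ℓ1 norm of
`W^L_{i,:} - W^L_{j,:}`.
-/

open Matrix

lemma vecL1_nonneg {n : ℕ} (v : Fin n → ℝ) : 0 ≤ vecL1 v :=
  Finset.sum_nonneg fun _ _ => abs_nonneg _

lemma matLinf_nonneg {m n : ℕ} (W : Matrix (Fin m) (Fin n) ℝ) : 0 ≤ matLinf W :=
  Real.iSup_nonneg fun _ => Finset.sum_nonneg fun _ _ => abs_nonneg _

lemma vecL1_row_le_matLinf {m n : ℕ} (W : Matrix (Fin m) (Fin n) ℝ) (p : Fin m) :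
    vecL1 (W p) ≤ matLinf W :=
  le_ciSup (f := fun p => ∑ q, |W p q|) (Set.finite_range _).bddAbove p

lemma vecL1_le_add_of_abs_sub_le {n : ℕ} {u u' : Fin n → ℝ} {ε : ℝ}
    (h : ∀ q, |u' q - u q| ≤ ε) : vecL1 u' ≤ vecL1 u + n * ε := by
  calc vecL1 u' ≤ ∑ q, (|u q| + ε) :=
        Finset.sum_le_sum fun q _ => by linarith [h q, abs_sub_abs_le_abs_sub (u' q) (u q)]
    _ = vecL1 u + n * ε := by simp [vecL1, Finset.sum_add_distrib]

lemma abs_dotProduct_le_vecL1_mul {n : ℕ} (u : Fin n → ℝ) {w : Fin n → ℝ} {a : ℝ}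
    (hw : ∀ q, |w q| ≤ a) : |u ⬝ᵥ w| ≤ vecL1 u * a := by
  calc |u ⬝ᵥ w| ≤ ∑ q, |u q * w q| := Finset.abs_sum_le_sum_abs _ _
    _ ≤ ∑ q, |u q| * a := Finset.sum_le_sum fun q _ => by
        rw [abs_mul]; exact mul_le_mul_of_nonneg_left (hw q) (abs_nonneg _)
    _ = vecL1 u * a := (Finset.sum_mul ..).symm

lemma abs_mulVec_apply_le_matLinf_mul {m n : ℕ} (W : Matrix (Fin m) (Fin n) ℝ)
    {w : Fin n → ℝ} {a : ℝ} (ha : 0 ≤ a) (hw : ∀ q, |w q| ≤ a) (p : Fin m) :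
    |(W *ᵥ w) p| ≤ matLinf W * a :=
  (abs_dotProduct_le_vecL1_mul (W p) hw).trans <|
    mul_le_mul_of_nonneg_right (vecL1_row_le_matLinf W p) ha

lemma abs_mulVec_apply_sub_mulVec_apply_le {m n : ℕ} {W W' : Matrix (Fin m) (Fin n) ℝ}
    {u u' : Fin n → ℝ} {ε δ : ℝ} (hδ : 0 ≤ δ)
    (hW : ∀ p q, |W' p q - W p q| ≤ ε) (hu : ∀ q, |u' q - u q| ≤ δ) (p : Fin m) :
    |(W' *ᵥ u') p - (W *ᵥ u) p| ≤ ε * vecL1 u + δ * (matLinf W + n * ε) := by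
  have hsplit : (W' *ᵥ u') p - (W *ᵥ u) p = W' p ⬝ᵥ (u' - u) + u ⬝ᵥ (W' p - W p) := by
    simp only [mulVec, dotProduct_sub, dotProduct_comm u, sub_dotProduct]; ring
  have hrow : vecL1 (W' p) ≤ matLinf W + n * ε := by
    linarith [vecL1_le_add_of_abs_sub_le (hW p), vecL1_row_le_matLinf W p]
  rw [hsplit]
  calc _ ≤ |W' p ⬝ᵥ (u' - u)| + |u ⬝ᵥ (W' p - W p)| := abs_add_le _ _
    _ ≤ vecL1 (W' p) * δ + vecL1 u * ε :=
        add_le_add (abs_dotProduct_le_vecL1_mul _ hu) (abs_dotProduct_le_vecL1_mul _ (hW p))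
    _ ≤ (matLinf W + n * ε) * δ + vecL1 u * ε := by gcongr
    _ = ε * vecL1 u + δ * (matLinf W + n * ε) := by ring

section Layers

variable {d : ℕ → ℕ} {ρ : ℝ → ℝ} (hρ : ∀ s t, |ρ s - ρ t| ≤ |s - t|)
  {W W' : ∀ k, Matrix (Fin (d (k + 1))) (Fin (d k)) ℝ} {x x' : Fin (d 0) → ℝ}
include hρ

lemma abs_zLayer_succ_sub_le (k : ℕ) (p : Fin (d (k + 1))) :
    |zLayer d ρ W' (k + 1) x' p - zLayer d ρ W (k + 1) x p| ≤
      |(W' k *ᵥ zLayer d ρ W' k x') p - (W k *ᵥ zLayer d ρ W k x) p| :=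
  hρ _ _

lemma abs_zLayer_sub_le_prod_mul {a b : ℕ} (hab : a ≤ b)
    (hW : ∀ k, a ≤ k → k < b → W' k = W k) {δ : ℝ} (hδ : 0 ≤ δ)
    (h : ∀ p, |zLayer d ρ W' a x' p - zLayer d ρ W a x p| ≤ δ) :
    ∀ p, |zLayer d ρ W' b x' p - zLayer d ρ W b x p| ≤
      (∏ m ∈ Finset.Ico a b, matLinf (W m)) * δ := by
  induction b, hab using Nat.le_induction with
  | base => simpa using h
  | succ k hak ih =>
    intro p
    have hprod : 0 ≤ ∏ m ∈ Finset.Ico a k, matLinf (W m) :=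
      Finset.prod_nonneg fun m _ => matLinf_nonneg _
    have hdiff : (W' k *ᵥ zLayer d ρ W' k x') p - (W k *ᵥ zLayer d ρ W k x) p =
        (W k *ᵥ (zLayer d ρ W' k x' - zLayer d ρ W k x)) p := by
      rw [hW k hak (Nat.lt_succ_self k), mulVec_sub, Pi.sub_apply]
    calc _ ≤ |(W k *ᵥ (zLayer d ρ W' k x' - zLayer d ρ W k x)) p| :=
          hdiff ▸ abs_zLayer_succ_sub_le hρ k p
      _ ≤ matLinf (W k) * ((∏ m ∈ Finset.Ico a k, matLinf (W m)) * δ) :=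
          abs_mulVec_apply_le_matLinf_mul _ (mul_nonneg hprod hδ)
            (ih (fun k hk hkb => hW k hk (hkb.trans (Nat.lt_succ_self _)))) p
      _ = (∏ m ∈ Finset.Ico a (k + 1), matLinf (W m)) * δ := by
          rw [Finset.prod_Ico_succ_top hak]; ring

lemma abs_zLayer_succ_sub_le_of_perturb (k : ℕ) {ε δ : ℝ} (hδ : 0 ≤ δ)
    (hW : ∀ p q, |W' k p q - W k p q| ≤ ε)
    (h : ∀ q, |zLayer d ρ W' k x' q - zLayer d ρ W k x q| ≤ δ) (p : Fin (d (k + 1))) :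
    |zLayer d ρ W' (k + 1) x' p - zLayer d ρ W (k + 1) x p| ≤
      ε * vecL1 (zLayer d ρ W k x) + δ * (matLinf (W k) + d k * ε) :=
  (abs_zLayer_succ_sub_le hρ k p).trans (abs_mulVec_apply_sub_mulVec_apply_le hδ hW h p)

end Layers

lemma nnet_margin_le_of_abs_zLayer_sub_le {d : ℕ → ℕ} {ρ : ℝ → ℝ}
    {W W' : ∀ k, Matrix (Fin (d (k + 1))) (Fin (d k)) ℝ} {x x' : Fin (d 0) → ℝ} {k : ℕ}
    (hWk : W' k = W k) {δ : ℝ}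
    (h : ∀ q, |zLayer d ρ W' k x' q - zLayer d ρ W k x q| ≤ δ) (i j : Fin (d (k + 1))) :
    nnet d ρ W' k x' i - nnet d ρ W' k x' j ≤
      (nnet d ρ W k x i - nnet d ρ W k x j) + vecL1 (fun q => W k i q - W k j q) * δ := by
  have hmargin : nnet d ρ W' k x' i - nnet d ρ W' k x' j =
      (nnet d ρ W k x i - nnet d ρ W k x j) +
        (W k i - W k j) ⬝ᵥ (zLayer d ρ W' k x' - zLayer d ρ W k x) := by
    simp only [nnet, hWk, mulVec, dotProduct_sub, sub_dotProduct]; ring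
  rw [hmargin]
  exact add_le_add_right ((le_abs_self _).trans (abs_dotProduct_le_vecL1_mul _ fun q => h q)) _

theorem statement0_general
    (d : ℕ → ℕ) (ρ : ℝ → ℝ)
    (hρ_lip : ∀ s t, |ρ s - ρ t| ≤ |s - t|)
    (L N : ℕ) (hN : 1 ≤ N) (hNL : N + 1 ≤ L)
    (W What : ∀ k, Matrix (Fin (d (k + 1))) (Fin (d k)) ℝ)
    (εN εx : ℝ) (hεN : 0 ≤ εN) (hεx : 0 ≤ εx)
    (hWeq : ∀ k, k ≠ N - 1 → What k = W k)
    (hWN : ∀ p q, |What (N - 1) p q - W (N - 1) p q| ≤ εN)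
    (x xhat : Fin (d 0) → ℝ) (hx : ∀ q, |xhat q - x q| ≤ εx)
    (i j : Fin (d (L - 1 + 1))) :
    nnet d ρ What (L - 1) xhat i - nnet d ρ What (L - 1) xhat j ≤
      (nnet d ρ W (L - 1) x i - nnet d ρ W (L - 1) x j) +
        vecL1 (fun q => W (L - 1) i q - W (L - 1) j q) *
          (∏ k ∈ Finset.Ico N (L - 1), matLinf (W k)) *
          (εN * vecL1 (zLayer d ρ W (N - 1) x) +
            εx * (∏ m ∈ Finset.range (N - 1), matLinf (W m)) *
              (matLinf (W (N - 1)) + (d (N - 1) : ℝ) * εN)) := by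
  have hprod : ∀ s : Finset ℕ, 0 ≤ ∏ m ∈ s, matLinf (W m) :=
    fun s => Finset.prod_nonneg fun m _ => matLinf_nonneg _
  have h_below : ∀ p, |zLayer d ρ What (N - 1) xhat p - zLayer d ρ W (N - 1) x p| ≤
      εx * ∏ m ∈ Finset.range (N - 1), matLinf (W m) := by
    rw [mul_comm, Finset.range_eq_Ico]
    exact abs_zLayer_sub_le_prod_mul hρ_lip (Nat.zero_le _)
      (fun k _ hk => hWeq k hk.ne) hεx hx
  set C := εN * vecL1 (zLayer d ρ W (N - 1) x) +
    εx * (∏ m ∈ Finset.range (N - 1), matLinf (W m)) *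
      (matLinf (W (N - 1)) + (d (N - 1) : ℝ) * εN)
  have h_at : ∀ p, |zLayer d ρ What (N - 1 + 1) xhat p - zLayer d ρ W (N - 1 + 1) x p| ≤ C :=
    abs_zLayer_succ_sub_le_of_perturb hρ_lip (N - 1) (mul_nonneg hεx (hprod _)) hWN h_below
  have hC : 0 ≤ C :=
    add_nonneg (mul_nonneg hεN (vecL1_nonneg _)) <| mul_nonneg (mul_nonneg hεx (hprod _)) <|
      add_nonneg (matLinf_nonneg _) (by positivity)
  have h_above := abs_zLayer_sub_le_prod_mul hρ_lip (b := L - 1) (by omega)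
    (fun k hk _ => hWeq k (by omega)) hC h_at
  rw [Nat.sub_add_cancel hN] at h_above
  rw [mul_assoc _ (∏ k ∈ Finset.Ico N (L - 1), matLinf (W k))]
  exact nnet_margin_le_of_abs_zLayer_sub_le (hWeq _ (by omega)) h_above i j

/-- Theorem 1, case `N ≠ L`: joint perturbation of the `N`-th weight
matrix and the input, `1 ≤ N ≤ L−1`.

Indexing convention: the Lean matrix `W k` is the paper's `W^{k+1}`, so the paper's
`W^N` is `W (N-1)`, its number of columns `d_N` is `d (N-1)`, the paper's `L`-layer
network is `nnet d ρ W (L-1)`, and `z^{N-1}_W(x) = zLayer d ρ W (N-1) x`.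
The paper's products `∏_{k=1}^{L-N-1} ‖W^{L-k}‖_∞ = ∏_{m=N+1}^{L-1} ‖W^m‖_∞` and
`∏_{m=1}^{N-1} ‖W^m‖_∞` become products over the Lean index sets
`Finset.Ico N (L-1)` and `Finset.range (N-1)` respectively (empty products are 1). -/
theorem statement0
    (d : ℕ → ℕ) (ρ : ℝ → ℝ)
    (hρ_nonneg : ∀ t, 0 ≤ ρ t) (hρ_mono : Monotone ρ)
    (hρ_lip : ∀ s t, |ρ s - ρ t| ≤ |s - t|)
    (L N : ℕ) (hN : 1 ≤ N) (hNL : N + 1 ≤ L)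
    (W What : ∀ k, Matrix (Fin (d (k + 1))) (Fin (d k)) ℝ)
    (εN εx : ℝ) (hεN : 0 ≤ εN) (hεx : 0 ≤ εx)
    (hWeq : ∀ k, k ≠ N - 1 → What k = W k)
    (hWN : ∀ p q, |What (N - 1) p q - W (N - 1) p q| ≤ εN)
    (x xhat : Fin (d 0) → ℝ) (hx : ∀ q, |xhat q - x q| ≤ εx)
    (i j : Fin (d (L - 1 + 1))) :
    nnet d ρ What (L - 1) xhat i - nnet d ρ What (L - 1) xhat j ≤
      (nnet d ρ W (L - 1) x i - nnet d ρ W (L - 1) x j) +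
        vecL1 (fun q => W (L - 1) i q - W (L - 1) j q) *
          (∏ k ∈ Finset.Ico N (L - 1), matLinf (W k)) *
          (εN * vecL1 (zLayer d ρ W (N - 1) x) +
            εx * (∏ m ∈ Finset.range (N - 1), matLinf (W m)) *
              (matLinf (W (N - 1)) + (d (N - 1) : ℝ) * εN)) :=
  statement0_general d ρ hρ_lip L N hN hNL W What εN εx hεN hεx hWeq hWN x xhat hx i j
end

section
/- Let W^1, W^2 be real matrices, let ρ:ℝ→ℝ be 1-Lipschitz and applied entrywise, let Ŵ^2 ∈ B_{W^2}(ε_2) and x̂ ∈ B_x(ε_x). Then the second-layer pre-activation error under joint input-weight perturbation satisfies ‖Ŵ^2 ρ(W^1 x̂) − W^2 ρ(W^1 x)‖_∞ ≤ ε_2 ‖ρ(W^1 x)‖_1 + ε_x ‖Ŵ^2‖_∞ ‖W^1‖_∞. -/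
open Matrix

lemma vecLinf_le {n : ℕ} {v : Fin n → ℝ} {c : ℝ} (hc : 0 ≤ c) (hv : ∀ i, |v i| ≤ c) :
    vecLinf v ≤ c :=
  Real.iSup_le hv hc

section RowBounds

variable {m n : ℕ} (A : Matrix (Fin m) (Fin n) ℝ)

lemma matLinf_nonneg_s6 : 0 ≤ matLinf A :=
  Real.iSup_nonneg fun _ => Finset.sum_nonneg fun _ _ => abs_nonneg _

lemma sum_abs_row_le_matLinf (p : Fin m) : ∑ q, |A p q| ≤ matLinf A :=
  le_ciSup (f := fun p => ∑ q, |A p q|) (Set.finite_range _).bddAbove p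

lemma abs_mulVec_le_sum_abs_mul (v : Fin n → ℝ) (p : Fin m) :
    |(A *ᵥ v) p| ≤ ∑ q, |A p q| * |v q| := by
  simp only [mulVec, dotProduct, ← abs_mul]
  exact Finset.abs_sum_le_sum_abs _ _

lemma abs_mulVec_le_matLinf_mul {v : Fin n → ℝ} {c : ℝ} (hc : 0 ≤ c) (hv : ∀ q, |v q| ≤ c)
    (p : Fin m) : |(A *ᵥ v) p| ≤ matLinf A * c :=
  calc |(A *ᵥ v) p| ≤ ∑ q, |A p q| * |v q| := abs_mulVec_le_sum_abs_mul A v p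
    _ ≤ ∑ q, |A p q| * c := by gcongr with q; exact hv q
    _ = (∑ q, |A p q|) * c := (Finset.sum_mul _ _ _).symm
    _ ≤ matLinf A * c := by gcongr; exact sum_abs_row_le_matLinf A p

lemma abs_mulVec_le_mul_vecL1 {p : Fin m} {ε : ℝ} (hA : ∀ q, |A p q| ≤ ε) (v : Fin n → ℝ) :
    |(A *ᵥ v) p| ≤ ε * vecL1 v :=
  calc |(A *ᵥ v) p| ≤ ∑ q, |A p q| * |v q| := abs_mulVec_le_sum_abs_mul A v p
    _ ≤ ∑ q, ε * |v q| := by gcongr with q; exact hA q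
    _ = ε * vecL1 v := (Finset.mul_sum _ _ _).symm

lemma abs_activation_sub_le {ρ : ℝ → ℝ} (hρ : ∀ s t, |ρ s - ρ t| ≤ |s - t|)
    {x x' : Fin n → ℝ} {c : ℝ} (hc : 0 ≤ c) (hx : ∀ q, |x' q - x q| ≤ c) (p : Fin m) :
    |ρ ((A *ᵥ x') p) - ρ ((A *ᵥ x) p)| ≤ matLinf A * c := by
  refine (hρ _ _).trans ?_
  rw [← Pi.sub_apply, ← mulVec_sub]
  exact abs_mulVec_le_matLinf_mul A hc hx p

end RowBounds

/-- second-layer pre-activation error under joint input-weight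
perturbation: `‖Ŵ^2 ρ(W^1 x̂) − W^2 ρ(W^1 x)‖_∞ ≤ ε_2 ‖ρ(W^1 x)‖_1 + ε_x ‖Ŵ^2‖_∞ ‖W^1‖_∞`. -/
theorem statement6 {n0 n1 n2 : ℕ}
    (W1 : Matrix (Fin n1) (Fin n0) ℝ) (W2 What2 : Matrix (Fin n2) (Fin n1) ℝ)
    (ρ : ℝ → ℝ) (hρ_lip : ∀ s t, |ρ s - ρ t| ≤ |s - t|)
    (ε2 εx : ℝ) (hε2 : 0 ≤ ε2) (hεx : 0 ≤ εx)
    (h2 : ∀ p q, |What2 p q - W2 p q| ≤ ε2)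
    (x xhat : Fin n0 → ℝ) (hx : ∀ q, |xhat q - x q| ≤ εx) :
    vecLinf (fun i => What2.mulVec (fun p => ρ (W1.mulVec xhat p)) i -
        W2.mulVec (fun p => ρ (W1.mulVec x p)) i) ≤
      ε2 * vecL1 (fun p => ρ (W1.mulVec x p)) + εx * matLinf What2 * matLinf W1 := by
  set y : Fin n1 → ℝ := fun p => ρ ((W1 *ᵥ x) p)
  set yhat : Fin n1 → ℝ := fun p => ρ ((W1 *ᵥ xhat) p)
  have hact : ∀ p, |(yhat - y) p| ≤ matLinf W1 * εx :=
    abs_activation_sub_le W1 hρ_lip hεx hx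
  have hW1 := matLinf_nonneg_s6 W1
  have hWhat2 := matLinf_nonneg_s6 What2
  have hy : 0 ≤ vecL1 y := Finset.sum_nonneg fun _ _ => abs_nonneg _
  have split : What2 *ᵥ yhat - W2 *ᵥ y = (What2 - W2) *ᵥ y + What2 *ᵥ (yhat - y) := by
    rw [sub_mulVec, mulVec_sub]; abel
  refine vecLinf_le (by positivity) fun i => ?_
  calc |(What2 *ᵥ yhat) i - (W2 *ᵥ y) i|
      = |((What2 - W2) *ᵥ y) i + (What2 *ᵥ (yhat - y)) i| := by
        rw [← Pi.sub_apply, split, Pi.add_apply]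
    _ ≤ |((What2 - W2) *ᵥ y) i| + |(What2 *ᵥ (yhat - y)) i| := abs_add_le _ _
    _ ≤ ε2 * vecL1 y + matLinf What2 * (matLinf W1 * εx) :=
        add_le_add (abs_mulVec_le_mul_vecL1 _ (h2 i) y)
          (abs_mulVec_le_matLinf_mul What2 (by positivity) hact i)
    _ = ε2 * vecL1 y + εx * matLinf What2 * matLinf W1 := by ring
end

section
/- Let f_W(x) = W^4 ρ(W^3 ρ(W^2 ρ(W^1 x))) be a 4-layer neural network and let f_Ŵ(x̂) = W^4 ρ(W^3 ρ(Ŵ^2 ρ(W^1 x̂))) be the network with the second weight matrix replaced by Ŵ^2 ∈ B_{W^2}(ε_2) and the input by x̂ ∈ B_x(ε_x). Then for any two output classes c_1, c_2: f^{c_1 c_2}_{Ŵ}(x̂) − f^{c_1 c_2}_W(x) ≤ η ‖W^3‖_∞ ‖W^4_{c_1,:} − W^4_{c_2,:}‖_1, where η = ε_2 ‖z^1‖_1 + ε_x ‖Ŵ^2‖_∞ ‖W^1‖_∞ and z^1 = ρ(W^1 x). -/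
/-- The 4-layer feed-forward network `f_W(x) = W^4 ρ(W^3 ρ(W^2 ρ(W^1 x)))`. -/
noncomputable def net4 {n0 n1 n2 n3 n4 : ℕ}
    (W1 : Matrix (Fin n1) (Fin n0) ℝ) (W2 : Matrix (Fin n2) (Fin n1) ℝ)
    (W3 : Matrix (Fin n3) (Fin n2) ℝ) (W4 : Matrix (Fin n4) (Fin n3) ℝ)
    (ρ : ℝ → ℝ) (x : Fin n0 → ℝ) : Fin n4 → ℝ :=
  W4.mulVec (fun p =>
    ρ (W3.mulVec (fun q =>
      ρ (W2.mulVec (fun r => ρ (W1.mulVec x r)) q)) p))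


/-! A perturbation is propagated through the network as a uniform bound on the entrywise deviation
of each hidden layer. Since `ρ` is `1`-Lipschitz it does not increase such a bound, and
multiplication by `W` scales it by `‖W‖_∞`. At the perturbed second layer one splits
`Ŵ² ẑ¹ - W² z¹ = Ŵ² (ẑ¹ - z¹) + (Ŵ² - W²) z¹`, the second term being at most `ε₂ ‖z¹‖₁` entrywise.
Finally the change of the margin is the pairing of `W⁴_{c₁,:} - W⁴_{c₂,:}` with the deviation of
the last hidden layer, which Hölder's inequality bounds by the product of its `ℓ¹` norm and
that deviation bound. -/

open Matrix

/-- `net4 W1 W2 W3 W4 ρ x` unfolds to `W4 *ᵥ layer W3 ρ (layer W2 ρ (layer W1 ρ x))`. -/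
def layer {m n : ℕ} (W : Matrix (Fin m) (Fin n) ℝ) (ρ : ℝ → ℝ) (u : Fin n → ℝ) : Fin m → ℝ :=
  fun p => ρ ((W *ᵥ u) p)

lemma sum_abs_le_matLinf {m n : ℕ} (W : Matrix (Fin m) (Fin n) ℝ) (p : Fin m) :
    ∑ q, |W p q| ≤ matLinf W :=
  le_ciSup (f := fun p => ∑ q, |W p q|) (Set.finite_range _).bddAbove p

lemma abs_mulVec_sub_le {m n : ℕ} (W : Matrix (Fin m) (Fin n) ℝ) {u v : Fin n → ℝ} {c : ℝ}
    (hc : 0 ≤ c) (h : ∀ q, |u q - v q| ≤ c) (p : Fin m) :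
    |(W *ᵥ u) p - (W *ᵥ v) p| ≤ c * matLinf W :=
  calc |(W *ᵥ u) p - (W *ᵥ v) p| = |∑ q, W p q * (u q - v q)| := by
        simp only [mulVec, dotProduct, mul_sub, Finset.sum_sub_distrib]
    _ ≤ ∑ q, |W p q| * c := by
        refine (Finset.abs_sum_le_sum_abs _ _).trans (Finset.sum_le_sum fun q _ => ?_)
        rw [abs_mul]
        exact mul_le_mul_of_nonneg_left (h q) (abs_nonneg _)
    _ ≤ c * matLinf W := by
        rw [← Finset.sum_mul, mul_comm]
        exact mul_le_mul_of_nonneg_left (sum_abs_le_matLinf W p) hc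

lemma abs_mulVec_sub_mulVec_le {m n : ℕ} {W' W : Matrix (Fin m) (Fin n) ℝ} {ε : ℝ}
    (h : ∀ p q, |W' p q - W p q| ≤ ε) (u : Fin n → ℝ) (p : Fin m) :
    |(W' *ᵥ u) p - (W *ᵥ u) p| ≤ ε * vecL1 u :=
  calc |(W' *ᵥ u) p - (W *ᵥ u) p| = |∑ q, (W' p q - W p q) * u q| := by
        simp only [mulVec, dotProduct, sub_mul, Finset.sum_sub_distrib]
    _ ≤ ∑ q, ε * |u q| := by
        refine (Finset.abs_sum_le_sum_abs _ _).trans (Finset.sum_le_sum fun q _ => ?_)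
        rw [abs_mul]
        exact mul_le_mul_of_nonneg_right (h p q) (abs_nonneg _)
    _ = ε * vecL1 u := (Finset.mul_sum _ _ _).symm

lemma abs_layer_sub_le {m n : ℕ} {ρ : ℝ → ℝ} (hρ : ∀ s t, |ρ s - ρ t| ≤ |s - t|)
    (W : Matrix (Fin m) (Fin n) ℝ) {u v : Fin n → ℝ} {c : ℝ}
    (hc : 0 ≤ c) (h : ∀ q, |u q - v q| ≤ c) (p : Fin m) :
    |layer W ρ u p - layer W ρ v p| ≤ c * matLinf W :=
  (hρ _ _).trans (abs_mulVec_sub_le W hc h p)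

lemma abs_layer_sub_layer_le {m n : ℕ} {ρ : ℝ → ℝ} (hρ : ∀ s t, |ρ s - ρ t| ≤ |s - t|)
    {W' W : Matrix (Fin m) (Fin n) ℝ} {u' u : Fin n → ℝ} {ε c : ℝ}
    (hW : ∀ p q, |W' p q - W p q| ≤ ε) (hc : 0 ≤ c) (hu : ∀ q, |u' q - u q| ≤ c) (p : Fin m) :
    |layer W' ρ u' p - layer W ρ u p| ≤ ε * vecL1 u + c * matLinf W' :=
  calc |layer W' ρ u' p - layer W ρ u p|
      ≤ |(W' *ᵥ u') p - (W' *ᵥ u) p| + |(W' *ᵥ u) p - (W *ᵥ u) p| :=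
        (hρ _ _).trans (abs_sub_le _ _ _)
    _ ≤ c * matLinf W' + ε * vecL1 u :=
        add_le_add (abs_mulVec_sub_le W' hc hu p) (abs_mulVec_sub_mulVec_le hW u p)
    _ = ε * vecL1 u + c * matLinf W' := add_comm _ _

lemma mulVec_margin_sub_le {m n : ℕ} (W : Matrix (Fin m) (Fin n) ℝ) {u v : Fin n → ℝ} {c : ℝ}
    (h : ∀ q, |u q - v q| ≤ c) (i j : Fin m) :
    ((W *ᵥ u) i - (W *ᵥ u) j) - ((W *ᵥ v) i - (W *ᵥ v) j) ≤ c * vecL1 (fun q => W i q - W j q) :=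
  calc ((W *ᵥ u) i - (W *ᵥ u) j) - ((W *ᵥ v) i - (W *ᵥ v) j)
      = ∑ q, (W i q - W j q) * (u q - v q) := by
        simp only [mulVec, dotProduct, ← Finset.sum_sub_distrib]
        exact Finset.sum_congr rfl fun q _ => by ring
    _ ≤ ∑ q, c * |W i q - W j q| := by
        refine Finset.sum_le_sum fun q _ => (le_abs_self _).trans ?_
        rw [abs_mul, mul_comm c]
        exact mul_le_mul_of_nonneg_left (h q) (abs_nonneg _)
    _ = c * vecL1 (fun q => W i q - W j q) := (Finset.mul_sum _ _ _).symm

theorem statement8_general {n0 n1 n2 n3 n4 : ℕ}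
    (W1 : Matrix (Fin n1) (Fin n0) ℝ) (W2 What2 : Matrix (Fin n2) (Fin n1) ℝ)
    (W3 : Matrix (Fin n3) (Fin n2) ℝ) (W4 : Matrix (Fin n4) (Fin n3) ℝ)
    (ρ : ℝ → ℝ) (hρ_lip : ∀ s t, |ρ s - ρ t| ≤ |s - t|)
    (ε2 εx : ℝ) (hε2 : 0 ≤ ε2) (hεx : 0 ≤ εx)
    (h2 : ∀ p q, |What2 p q - W2 p q| ≤ ε2)
    (x xhat : Fin n0 → ℝ) (hx : ∀ q, |xhat q - x q| ≤ εx)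
    (c1 c2 : Fin n4) :
    (net4 W1 What2 W3 W4 ρ xhat c1 - net4 W1 What2 W3 W4 ρ xhat c2) -
        (net4 W1 W2 W3 W4 ρ x c1 - net4 W1 W2 W3 W4 ρ x c2) ≤
      (ε2 * vecL1 (fun r => ρ (W1.mulVec x r)) + εx * matLinf What2 * matLinf W1) *
        matLinf W3 * vecL1 (fun t => W4 c1 t - W4 c2 t) := by
  set η := ε2 * vecL1 (layer W1 ρ x) + εx * matLinf What2 * matLinf W1
  have hη : 0 ≤ η := add_nonneg (mul_nonneg hε2 (vecL1_nonneg _))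
    (mul_nonneg (mul_nonneg hεx (matLinf_nonneg _)) (matLinf_nonneg _))
  have hz1 := abs_layer_sub_le hρ_lip W1 hεx hx
  have hz2 (q : Fin n2) :
      |layer What2 ρ (layer W1 ρ xhat) q - layer W2 ρ (layer W1 ρ x) q| ≤ η :=
    (abs_layer_sub_layer_le hρ_lip h2 (mul_nonneg hεx (matLinf_nonneg _)) hz1 q).trans_eq
      (by ring)
  exact mulVec_margin_sub_le W4 (abs_layer_sub_le hρ_lip W3 hη hz2) c1 c2

/-- for a 4-layer network with the second weight matrix perturbed
(`Ŵ^2 ∈ B_{W^2}(ε_2)`) and the input perturbed (`x̂ ∈ B_x(ε_x)`), for any output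
classes `c₁, c₂`:
`f^{c₁c₂}_{Ŵ}(x̂) − f^{c₁c₂}_W(x) ≤ η ‖W^3‖_∞ ‖W^4_{c₁,:} − W^4_{c₂,:}‖_1`,
where `η = ε_2 ‖z^1‖_1 + ε_x ‖Ŵ^2‖_∞ ‖W^1‖_∞` and `z^1 = ρ(W^1 x)`. -/
theorem statement8 {n0 n1 n2 n3 n4 : ℕ}
    (W1 : Matrix (Fin n1) (Fin n0) ℝ) (W2 What2 : Matrix (Fin n2) (Fin n1) ℝ)
    (W3 : Matrix (Fin n3) (Fin n2) ℝ) (W4 : Matrix (Fin n4) (Fin n3) ℝ)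
    (ρ : ℝ → ℝ) (hρ_nonneg : ∀ t, 0 ≤ ρ t) (hρ_mono : Monotone ρ)
    (hρ_lip : ∀ s t, |ρ s - ρ t| ≤ |s - t|)
    (ε2 εx : ℝ) (hε2 : 0 ≤ ε2) (hεx : 0 ≤ εx)
    (h2 : ∀ p q, |What2 p q - W2 p q| ≤ ε2)
    (x xhat : Fin n0 → ℝ) (hx : ∀ q, |xhat q - x q| ≤ εx)
    (c1 c2 : Fin n4) :
    (net4 W1 What2 W3 W4 ρ xhat c1 - net4 W1 What2 W3 W4 ρ xhat c2) -
        (net4 W1 W2 W3 W4 ρ x c1 - net4 W1 W2 W3 W4 ρ x c2) ≤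
      (ε2 * vecL1 (fun r => ρ (W1.mulVec x r)) + εx * matLinf What2 * matLinf W1) *
        matLinf W3 * vecL1 (fun t => W4 c1 t - W4 c2 t) :=
  statement8_general W1 W2 What2 W3 W4 ρ hρ_lip ε2 εx hε2 hεx h2 x xhat hx c1 c2
end
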